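/- For any constants B > 0 and D > 0, there are only finitely many algebraic numbers α with H(α) ≤ B and [ℚ(α):ℚ] ≤ D. -/

import Mathlib

/-- The Mahler measure of an integer polynomial `f = a_n (X - α_1) ⋯ (X - α_n)`:
`M(f) = |a_n| ⬝ ∏ max(|α_i|, 1)`, over the complex roots with multiplicity. -/
noncomputable def mahlerMeasure (f : Polynomial ℤ) : ℝ :=
  |(f.leadingCoeff : ℝ)| *
    (((f.map (Int.castRingHom ℂ)).roots).map (fun z => max ‖z‖ 1)).prod

/-- The primitive integer minimal polynomial of an algebraic number `α`:
the minimal polynomial of `α` over `ℚ` with denominators cleared, taken primitive. -/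
noncomputable def intMinpoly (α : ℂ) : Polynomial ℤ :=
  (IsLocalization.integerNormalization (nonZeroDivisors ℤ) (minpoly ℚ α)).primPart

/-- The absolute multiplicative Weil height of an algebraic number `α`, characterized by
`H(α) ^ deg α = M(f)` where `f` is the primitive integer minimal polynomial of `α`. -/
noncomputable def mulHeight (α : ℂ) : ℝ :=
  mahlerMeasure (intMinpoly α) ^ (((intMinpoly α).natDegree : ℝ)⁻¹)

/-!
The primitive integer minimal polynomial `f` of `α` has degree `[ℚ(α):ℚ]` and Mahler measure
`M(f) = H(α) ^ deg f`, so bounding height and degree bounds `deg f` and `M(f)`. By Northcott's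
theorem for integer polynomials (the coefficients of `f` are bounded by binomial coefficients
times `M(f)`), only finitely many such `f` occur, and each has finitely many roots.
-/

open scoped Polynomial nonZeroDivisors

open IsLocalization Polynomial in
theorem IsFractionRing.natDegree_integerNormalization {A K : Type*} [CommRing A] [IsDomain A]
    [Field K] [Algebra A K] [IsFractionRing A K] (p : K[X]) :
    (integerNormalization A⁰ p).natDegree = p.natDegree := by
  obtain ⟨b, hb, hmap⟩ := integerNormalization_spec A⁰ p
  rw [← natDegree_map_eq_of_injective (IsFractionRing.injective A K), hmap,
    natDegree_smul p (nonZeroDivisors.ne_zero hb)]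

theorem mahlerMeasure_eq_mahlerMeasure_map (f : ℤ[X]) :
    mahlerMeasure f = (f.map (Int.castRingHom ℂ)).mahlerMeasure := by
  rw [Polynomial.mahlerMeasure_eq_leadingCoeff_mul_prod_roots,
    Polynomial.leadingCoeff_map_of_injective (RingHom.injective_int _)]
  simp [mahlerMeasure, max_comm]

theorem mahlerMeasure_nonneg (f : ℤ[X]) : 0 ≤ mahlerMeasure f :=
  mahlerMeasure_eq_mahlerMeasure_map f ▸ Polynomial.mahlerMeasure_nonneg _

theorem mulHeight_nonneg (α : ℂ) : 0 ≤ mulHeight α :=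
  Real.rpow_nonneg (mahlerMeasure_nonneg _) _

theorem natDegree_intMinpoly (α : ℂ) : (intMinpoly α).natDegree = (minpoly ℚ α).natDegree := by
  rw [intMinpoly, Polynomial.natDegree_primPart, IsFractionRing.natDegree_integerNormalization]

theorem aeval_intMinpoly {α : ℂ} (hα : IsIntegral ℚ α) : Polynomial.aeval α (intMinpoly α) = 0 :=
  Polynomial.aeval_primPart_eq_zero
    (IsFractionRing.integerNormalization_eq_zero_iff.not.mpr (minpoly.ne_zero hα))
    (IsLocalization.integerNormalization_aeval_eq_zero _ _ (minpoly.aeval ℚ α))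

theorem mahlerMeasure_intMinpoly_eq_mulHeight_pow {α : ℂ} (hα : IsIntegral ℚ α) :
    mahlerMeasure (intMinpoly α) = mulHeight α ^ (intMinpoly α).natDegree := by
  have hdeg : (intMinpoly α).natDegree ≠ 0 := by
    rw [natDegree_intMinpoly]
    exact (minpoly.natDegree_pos hα).ne'
  exact (Real.rpow_inv_natCast_pow (mahlerMeasure_nonneg _) hdeg).symm

theorem mahlerMeasure_intMinpoly_le {α : ℂ} {B : ℝ} {N : ℕ} (hα : IsIntegral ℚ α)
    (hH : mulHeight α ≤ B) (hN : (intMinpoly α).natDegree ≤ N) :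
    mahlerMeasure (intMinpoly α) ≤ max B 1 ^ N :=
  calc mahlerMeasure (intMinpoly α) = mulHeight α ^ (intMinpoly α).natDegree :=
        mahlerMeasure_intMinpoly_eq_mulHeight_pow hα
    _ ≤ max B 1 ^ (intMinpoly α).natDegree :=
        pow_le_pow_left₀ (mulHeight_nonneg α) (hH.trans (le_max_left B 1)) _
    _ ≤ max B 1 ^ N := pow_le_pow_right₀ (le_max_right B 1) hN

theorem finite_of_height_le_and_degree_le_general (B D : ℝ) :
    {α : ℂ | IsAlgebraic ℚ α ∧ mulHeight α ≤ B ∧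
      ((minpoly ℚ α).natDegree : ℝ) ≤ D}.Finite := by
  set N := ⌈D⌉₊
  have hpolys := Polynomial.finite_mahlerMeasure_le N (max B 1 ^ N).toNNReal
  refine (hpolys.biUnion fun f _ => (f.aroots ℂ).toFinset.finite_toSet).subset ?_
  rintro α ⟨hα, hH, hdeg⟩
  have hN : (intMinpoly α).natDegree ≤ N := by
    rw [natDegree_intMinpoly]
    exact_mod_cast hdeg.trans (Nat.le_ceil D)
  refine Set.mem_biUnion (x := intMinpoly α) ⟨hN, ?_⟩ ?_
  · rw [← mahlerMeasure_eq_mahlerMeasure_map]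
    exact (mahlerMeasure_intMinpoly_le hα.isIntegral hH hN).trans (Real.le_coe_toNNReal _)
  · rw [Finset.mem_coe, Multiset.mem_toFinset, Polynomial.mem_aroots]
    exact ⟨Polynomial.primPart_ne_zero _, aeval_intMinpoly hα.isIntegral⟩

/-- Northcott's theorem: for any `B > 0` and `D > 0`, there are only finitely many
algebraic numbers `α` with `H(α) ≤ B` and `[ℚ(α):ℚ] ≤ D`. -/
theorem finite_of_height_le_and_degree_le (B D : ℝ) (hB : 0 < B) (hD : 0 < D) :
    {α : ℂ | IsAlgebraic ℚ α ∧ mulHeight α ≤ B ∧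
      ((minpoly ℚ α).natDegree : ℝ) ≤ D}.Finite :=
  finite_of_height_le_and_degree_le_general B D
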